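/- Let n be a finite type and let A : ℝ → M_n(ℝ) be continuous with A(t) i j ≥ 0 for all t and all i ≠ j, and with strictly negative row sums: ∑_j A(t) i j < 0 for every t and every i. Let Φ : ℝ → M_n(ℝ) be differentiable with Φ'(t) = Φ(t)·A(t) for all t and Φ(0) = I, and suppose Φ(t) is invertible for every t ≥ 0. Then for every t > 0 and every row i, the row sum of Φ(t) is strictly less than one: ∑_j Φ(t) i j < 1. -/

import Mathlib

open Matrix Filter Set

/-- Nonnegativity of the fundamental matrix of a Metzler system. -/
lemma phi_entry_nonneg {n : Type*} [Fintype n] [DecidableEq n]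
    (A Φ : ℝ → Matrix n n ℝ)
    (hAcont : ∀ i j, Continuous fun t => A t i j)
    (hMetzler : ∀ (t : ℝ) i j, i ≠ j → 0 ≤ A t i j)
    (hΦderiv : ∀ (t : ℝ) i j, HasDerivAt (fun s => Φ s i j) ((Φ t * A t) i j) t)
    (hΦ0 : Φ 0 = 1) :
    ∀ t : ℝ, 0 ≤ t → ∀ i j, 0 ≤ Φ t i j := by
  intro t₀ ht₀ i₀ j₀
  have hΦcont : ∀ i j, Continuous fun s => Φ s i j := fun i j =>
    continuous_iff_continuousAt.2 fun s => (hΦderiv s i j).continuousAt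
  -- bound on column sums of A on [0, t₀]
  obtain ⟨M, hM0, hM⟩ : ∃ M, 0 ≤ M ∧ ∀ s ∈ Icc (0:ℝ) t₀, ∀ j, ∑ k, A s k j ≤ M := by
    have hc : ContinuousOn (fun s => ∑ k, ∑ j, |A s k j|) (Icc (0:ℝ) t₀) := by
      refine Continuous.continuousOn ?_
      exact continuous_finset_sum _ fun k _ => continuous_finset_sum _ fun j _ =>
        (hAcont k j).abs
    obtain ⟨C, hC⟩ := (isCompact_Icc).exists_bound_of_continuousOn hc
    refine ⟨max C 0, le_max_right _ _, fun s hs j => ?_⟩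
    have h1 : ∑ k, A s k j ≤ ∑ k, ∑ j', |A s k j'| := by
      refine Finset.sum_le_sum fun k _ => ?_
      calc A s k j ≤ |A s k j| := le_abs_self _
        _ ≤ ∑ j', |A s k j'| := Finset.single_le_sum (f := fun j' => |A s k j'|)
              (fun j' _ => abs_nonneg _) (Finset.mem_univ j)
    have h2 := hC s hs
    rw [Real.norm_eq_abs] at h2
    calc ∑ k, A s k j ≤ ∑ k, ∑ j', |A s k j'| := h1
      _ ≤ C := le_trans (le_abs_self _) h2
      _ ≤ max C 0 := le_max_left _ _
  set K : ℝ := M + 1 with hK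
  have hKpos : 0 < K := by positivity
  -- key positivity of perturbed matrix
  have key : ∀ ε : ℝ, 0 < ε → ∀ s ∈ Icc (0:ℝ) t₀, ∀ i j,
      0 < Φ s i j + ε * Real.exp (K * s) := by
    intro ε hε
    by_contra hcon
    push_neg at hcon
    obtain ⟨s₁, hs₁, i₁, j₁, hle⟩ := hcon
    set g : n → n → ℝ → ℝ := fun i j s => Φ s i j + ε * Real.exp (K * s) with hg
    have hgcont : ∀ i j, Continuous (g i j) := fun i j =>
      (hΦcont i j).add (continuous_const.mul ((continuous_const.mul continuous_id).rexp))
    set S : Set ℝ := {s | s ∈ Icc (0:ℝ) t₀ ∧ ∃ i j, g i j s ≤ 0} with hS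
    have hSne : S.Nonempty := ⟨s₁, hs₁, i₁, j₁, hle⟩
    have hSclosed : IsClosed S := by
      have : S = Icc (0:ℝ) t₀ ∩ ⋃ i, ⋃ j, {s | g i j s ≤ 0} := by
        ext s; simp [hS, Set.mem_iUnion]
      rw [this]
      exact isClosed_Icc.inter (isClosed_iUnion_of_finite fun i =>
        isClosed_iUnion_of_finite fun j => isClosed_le (hgcont i j) continuous_const)
    have hSbdd : BddBelow S := ⟨0, fun x hx => hx.1.1⟩
    have hmem : sInf S ∈ S := hSclosed.csInf_mem hSne hSbdd
    set t' : ℝ := sInf S with ht'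
    obtain ⟨⟨ht'0, ht't₀⟩, i, j, hgle⟩ := hmem
    have ht'pos : 0 < t' := by
      rcases lt_or_eq_of_le ht'0 with h | h
      · exact h
      · exfalso
        have : g i j t' ≤ 0 := hgle
        rw [← h] at this
        simp only [hg, mul_zero, Real.exp_zero, mul_one, hΦ0] at this
        have h1 : (0:ℝ) ≤ (1 : Matrix n n ℝ) i j := by
          by_cases hij : i = j <;> simp [Matrix.one_apply, hij]
        linarith
    -- strict positivity before t'
    have hbefore : ∀ s ∈ Ico (0:ℝ) t', ∀ i' j', 0 < g i' j' s := by
      intro s hs i' j'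
      by_contra hns
      push_neg at hns
      have : s ∈ S := ⟨⟨hs.1, le_trans hs.2.le ht't₀⟩, i', j', hns⟩
      exact absurd (csInf_le hSbdd this) (not_le.2 hs.2)
    -- nonnegativity at t' by continuity from the left
    have hat : ∀ i' j', 0 ≤ g i' j' t' := by
      intro i' j'
      have htd : Tendsto (g i' j') (nhdsWithin t' (Iio t')) (nhds (g i' j' t')) :=
        ((hgcont i' j').continuousAt).continuousWithinAt.tendsto
      have hev : ∀ᶠ s in nhdsWithin t' (Iio t'), 0 ≤ g i' j' s := by
        have hmem : Ioo 0 t' ∈ nhdsWithin t' (Iio t') := by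
          rw [mem_nhdsWithin]
          exact ⟨Ioi 0, isOpen_Ioi, ht'pos, fun x hx => ⟨hx.1, hx.2⟩⟩
        filter_upwards [hmem] with s hs
        exact (hbefore s ⟨hs.1.le, hs.2⟩ i' j').le
      exact ge_of_tendsto htd hev
    have hgzero : g i j t' = 0 := le_antisymm hgle (hat i j)
    -- derivative of g i j at t'
    have hE : HasDerivAt (fun s : ℝ => ε * Real.exp (K * s))
        (ε * (Real.exp (K * t') * K)) t' := by
      have h1 : HasDerivAt (fun s : ℝ => K * s) (K * 1) t' :=
        (hasDerivAt_id t').const_mul K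
      simpa using (h1.exp).const_mul ε
    set d : ℝ := (Φ t' * A t') i j + ε * (Real.exp (K * t') * K) with hd
    have hgd : HasDerivAt (g i j) d t' := (hΦderiv t' i j).add hE
    -- derivative is positive
    have hdpos : 0 < d := by
      set e : ℝ := Real.exp (K * t') with he
      have hepos : 0 < e := Real.exp_pos _
      have hsplit : (Φ t' * A t') i j
          = ∑ k, (Φ t' i k + ε * e) * A t' k j - ε * e * ∑ k, A t' k j := by
        rw [Matrix.mul_apply, Finset.mul_sum, ← Finset.sum_sub_distrib]
        congr 1; funext k; ring
      have hsum_nn : 0 ≤ ∑ k, (Φ t' i k + ε * e) * A t' k j := by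
        refine Finset.sum_nonneg fun k _ => ?_
        by_cases hk : k = j
        · subst hk
          have : Φ t' i k + ε * e = 0 := by
            have := hgzero; simp only [hg] at this; linarith [this]
          rw [this, zero_mul]
        · exact mul_nonneg (hat i k) (hMetzler t' k j hk)
      have hMle : ∑ k, A t' k j ≤ M := hM t' ⟨ht'0, ht't₀⟩ j
      have : ε * e * ∑ k, A t' k j ≤ ε * e * M :=
        mul_le_mul_of_nonneg_left hMle (by positivity)
      have hd2 : d = (∑ k, (Φ t' i k + ε * e) * A t' k j - ε * e * ∑ k, A t' k j)
          + ε * (e * K) := by rw [hd, hsplit]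
      rw [hd2, hK]
      nlinarith [hsum_nn, hepos, hε]
    -- contradiction: g is positive left of t' but g t' = 0 and g' t' > 0
    have hslope : Tendsto (slope (g i j) t') (nhdsWithin t' {t'}ᶜ) (nhds d) :=
      hasDerivAt_iff_tendsto_slope.1 hgd
    have hslope' : Tendsto (slope (g i j) t') (nhdsWithin t' (Iio t')) (nhds d) :=
      hslope.mono_left (nhdsWithin_mono _ fun x hx => ne_of_lt hx)
    have hev_pos : ∀ᶠ s in nhdsWithin t' (Iio t'), 0 < slope (g i j) t' s :=
      hslope'.eventually (eventually_gt_nhds hdpos)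
    have hev_neg : ∀ᶠ s in nhdsWithin t' (Iio t'), slope (g i j) t' s < 0 := by
      have hmem : Ioo 0 t' ∈ nhdsWithin t' (Iio t') := by
        rw [mem_nhdsWithin]
        exact ⟨Ioi 0, isOpen_Ioi, ht'pos, fun x hx => ⟨hx.1, hx.2⟩⟩
      filter_upwards [hmem] with s hs
      have h1 : 0 < g i j s := hbefore s ⟨hs.1.le, hs.2⟩ i j
      have h2 : s - t' < 0 := by linarith [hs.2]
      rw [slope_def_field]
      rw [div_neg_iff]
      left
      exact ⟨by rw [hgzero]; linarith, by linarith⟩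
    have : ∀ᶠ s in nhdsWithin t' (Iio t'), False := by
      filter_upwards [hev_pos, hev_neg] with s h1 h2; linarith
    exact (this.exists).elim fun _ h => h
  -- let ε → 0
  by_contra hneg
  push_neg at hneg
  set e : ℝ := Real.exp (K * t₀) with he
  have hepos : 0 < e := Real.exp_pos _
  have hε : 0 < -Φ t₀ i₀ j₀ / e := div_pos (by linarith) hepos
  have := key _ hε t₀ ⟨ht₀, le_refl _⟩ i₀ j₀
  rw [div_mul_cancel₀ _ (ne_of_gt hepos)] at this
  linarith

/-- If `A(t)` is Metzler with strictly negative row sums, then the row sums of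
the fundamental matrix `Φ(t)` of `ẋ = x·A(t)` are strictly less than one
for all `t > 0`. -/
theorem stmt_4 {n : Type*} [Fintype n] [DecidableEq n]
    (A Φ : ℝ → Matrix n n ℝ)
    (hAcont : ∀ i j, Continuous fun t => A t i j)
    (hMetzler : ∀ (t : ℝ) i j, i ≠ j → 0 ≤ A t i j)
    (hArow : ∀ (t : ℝ) i, ∑ j, A t i j < 0)
    (hΦderiv : ∀ (t : ℝ) i j, HasDerivAt (fun s => Φ s i j) ((Φ t * A t) i j) t)
    (hΦ0 : Φ 0 = 1)
    (hΦinv : ∀ t : ℝ, 0 ≤ t → IsUnit (Φ t)) :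
    ∀ t : ℝ, 0 < t → ∀ i, ∑ j, Φ t i j < 1 := by
  intro t ht i
  have hnn := phi_entry_nonneg A Φ hAcont hMetzler hΦderiv hΦ0
  set r : ℝ → ℝ := fun s => ∑ j, Φ s i j with hr
  have hrd : ∀ s : ℝ, HasDerivAt r (∑ j, (Φ s * A s) i j) s := fun s =>
    HasDerivAt.fun_sum fun j _ => hΦderiv s i j
  have hrc : Continuous r := continuous_iff_continuousAt.2 fun s => (hrd s).continuousAt
  have hderiv_neg : ∀ s ∈ interior (Ici (0:ℝ)), deriv r s < 0 := by
    intro s hs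
    rw [interior_Ici] at hs
    have hspos : (0:ℝ) < s := hs
    rw [(hrd s).deriv]
    have h1 : ∑ j, (Φ s * A s) i j = ∑ k, Φ s i k * ∑ j, A s k j := by
      simp only [Matrix.mul_apply]
      rw [Finset.sum_comm]
      exact Finset.sum_congr rfl fun k _ => (Finset.mul_sum _ _ _).symm
    rw [h1]
    -- row i of Φ s is nonzero
    obtain ⟨k₀, hk₀⟩ : ∃ k, Φ s i k ≠ 0 := by
      by_contra hall
      push_neg at hall
      obtain ⟨u, hu⟩ := hΦinv s hspos.le
      have h2 : Φ s * (↑u⁻¹ : Matrix n n ℝ) = 1 := by rw [← hu]; exact u.mul_inv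
      have h3 : (Φ s * (↑u⁻¹ : Matrix n n ℝ)) i i = 1 := by rw [h2]; simp [Matrix.one_apply]
      rw [Matrix.mul_apply] at h3
      simp only [hall, zero_mul, Finset.sum_const_zero] at h3
      exact one_ne_zero h3.symm
    have hk₀pos : 0 < Φ s i k₀ := lt_of_le_of_ne (hnn s hspos.le i k₀) (Ne.symm hk₀)
    have : ∑ k, Φ s i k * ∑ j, A s k j < ∑ k : n, (0:ℝ) := by
      refine Finset.sum_lt_sum (fun k _ => ?_) ⟨k₀, Finset.mem_univ _, ?_⟩
      · exact mul_nonpos_of_nonneg_of_nonpos (hnn s hspos.le i k) (hArow s k).le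
      · exact mul_neg_of_pos_of_neg hk₀pos (hArow s k₀)
    simpa using this
  have hanti : StrictAntiOn r (Ici (0:ℝ)) :=
    strictAntiOn_of_deriv_neg (convex_Ici 0) hrc.continuousOn hderiv_neg
  have h0 : r 0 = 1 := by
    simp [hr, hΦ0, Matrix.one_apply]
  have := hanti (self_mem_Ici) (mem_Ici.2 ht.le) ht
  rw [h0] at this
  exact this
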